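/- arXiv:2207.08043 — 4 statements merged into one kernel-verified Lean document; each statement's English description precedes it below -/
import Mathlib

section
/- Let n ≥ 1, let 0 ≤ x_1 ≤ x_2 ≤ … ≤ x_n ≤ 1, and let F(x) = (n+1)x² − x − 2∑_{k=1}^{n} max{x, x_k}. If x* ∈ [0,1] is a global minimizer of F on [0,1], then x* is different from each of x_1,…,x_n, and x* = (2m+1)/(2n+2) for some integer m ≥ 0. -/
/-!
Between consecutive points `x_k` the functional is a convex quadratic whose slope at `x` is
`2(n+1)x - 1 - 2#{k | x_k ≤ x}` to the right and `2(n+1)x - 1 - 2#{k | x_k < x}` to the left.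
At a local minimiser the right slope is `≥ 0` and the left slope is `≤ 0`, which forces the two
counts to agree, so no `x_k` equals the minimiser, and the common slope `2(n+1)x - 1 - 2m`
vanishes. The one-sided perturbations stay in `[0, 1]`: a negative right slope forces
`x < (2m+1)/(2n+2) < 1`, a positive left slope forces `x > 0`.
-/

open Filter Topology Finset

variable {ι : Type*} [Fintype ι] (xs : ι → ℝ)

noncomputable def kritzinger (x : ℝ) : ℝ :=
  (Fintype.card ι + 1 : ℝ) * x ^ 2 - x - 2 * ∑ k, max x (xs k)

lemma kritzinger_sub_kritzinger {y z : ℝ} (hyz : y ≤ z) (hgap : ∀ k, xs k ≤ y ∨ z ≤ xs k) :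
    kritzinger xs z - kritzinger xs y =
      (z - y) * ((Fintype.card ι + 1) * (z + y) - 1 - 2 * #{k | xs k ≤ y}) := by
  have hmax : ∀ k, max z (xs k) - max y (xs k) = if xs k ≤ y then z - y else 0 := by
    intro k
    rcases hgap k with h | h
    · simp [h, h.trans hyz]
    · rw [max_eq_right h, max_eq_right (hyz.trans h)]
      split_ifs <;> linarith
  have hsum : ∑ k, max z (xs k) - ∑ k, max y (xs k) = #{k | xs k ≤ y} * (z - y) := by
    rw [← sum_sub_distrib, sum_congr rfl fun k _ => hmax k, ← sum_filter, sum_const,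
      nsmul_eq_mul]
  unfold kritzinger
  linear_combination (-2) * hsum

lemma eventually_same_side (y : ℝ) :
    ∀ᶠ z in 𝓝 y, ∀ k, (xs k < y → xs k < z) ∧ (y < xs k → z < xs k) :=
  eventually_all.2 fun _ =>
    (eventually_imp_distrib_left.2 eventually_gt_nhds).and
      (eventually_imp_distrib_left.2 eventually_lt_nhds)

variable {xs}

lemma kritzinger_right_slope_nonneg_of_isLocalMinOn {y : ℝ}
    (hmin : IsLocalMinOn (kritzinger xs) (Set.Icc 0 1) y) (hy : y ∈ Set.Icc (0 : ℝ) 1) :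
    2 * (#{k | xs k ≤ y} : ℝ) + 1 ≤ 2 * (Fintype.card ι + 1) * y := by
  by_contra! h
  have hcard : (#{k | xs k ≤ y} : ℝ) ≤ Fintype.card ι := by exact_mod_cast card_le_univ _
  have hy1 : y < 1 := by nlinarith
  have hIcc : Set.Icc 0 1 ∈ 𝓝[>] y :=
    mem_of_superset (Ioo_mem_nhdsGT hy1)
      (Set.Ioo_subset_Icc_self.trans (Set.Icc_subset_Icc_left hy.1))
  have hslope : ∀ᶠ z in 𝓝 y, (Fintype.card ι + 1) * (z + y) < 2 * #{k | xs k ≤ y} + 1 := by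
    have : Tendsto (fun z => (Fintype.card ι + 1 : ℝ) * (z + y)) (𝓝 y) (𝓝 (_ * (y + y))) :=
      (continuous_const.mul (continuous_id.add continuous_const)).tendsto y
    exact this.eventually (eventually_lt_nhds (by linarith))
  obtain ⟨z, ⟨hFz, hside, hzslope⟩, hyz⟩ := ((hmin.filter_mono (nhdsWithin_le_of_mem hIcc)).and
    (((eventually_same_side xs y).and hslope).filter_mono nhdsWithin_le_nhds)
    |>.and self_mem_nhdsWithin).exists
  have hyz : y < z := hyz
  have hdiff := kritzinger_sub_kritzinger xs hyz.le fun k =>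
    (le_or_gt (xs k) y).imp_right fun hk => ((hside k).2 hk).le
  nlinarith [mul_pos (sub_pos.2 hyz) (sub_pos.2 hzslope)]

lemma kritzinger_left_slope_nonpos_of_isLocalMinOn {y : ℝ}
    (hmin : IsLocalMinOn (kritzinger xs) (Set.Icc 0 1) y) (hy : y ∈ Set.Icc (0 : ℝ) 1) :
    2 * (Fintype.card ι + 1) * y ≤ 2 * (#{k | xs k < y} : ℝ) + 1 := by
  by_contra! h
  have hy0 : 0 < y := by
    by_contra! hy0
    nlinarith [(by positivity : (0 : ℝ) ≤ #{k | xs k < y})]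
  have hIcc : Set.Icc 0 1 ∈ 𝓝[<] y :=
    mem_of_superset (Ioo_mem_nhdsLT hy0)
      (Set.Ioo_subset_Icc_self.trans (Set.Icc_subset_Icc_right hy.2))
  have hslope : ∀ᶠ z in 𝓝 y, 2 * #{k | xs k < y} + 1 < (Fintype.card ι + 1) * (z + y) := by
    have : Tendsto (fun z => (Fintype.card ι + 1 : ℝ) * (z + y)) (𝓝 y) (𝓝 (_ * (y + y))) :=
      (continuous_const.mul (continuous_id.add continuous_const)).tendsto y
    exact this.eventually (eventually_gt_nhds (by linarith))
  obtain ⟨z, ⟨hFz, hside, hzslope⟩, hzy⟩ := ((hmin.filter_mono (nhdsWithin_le_of_mem hIcc)).and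
    (((eventually_same_side xs y).and hslope).filter_mono nhdsWithin_le_nhds)
    |>.and self_mem_nhdsWithin).exists
  have hzy : z < y := hzy
  have hcount : #{k | xs k ≤ z} = #{k | xs k < y} := by
    congr 1
    exact filter_congr fun k _ => ⟨fun hk => hk.trans_lt hzy, fun hk => ((hside k).1 hk).le⟩
  have hdiff := kritzinger_sub_kritzinger xs hzy.le fun k =>
    (le_or_gt y (xs k)).symm.imp_left fun hk => ((hside k).1 hk).le
  rw [hcount, add_comm y z] at hdiff
  nlinarith [mul_pos (sub_pos.2 hzy) (sub_pos.2 hzslope)]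

theorem ne_and_two_mul_eq_of_isLocalMinOn_kritzinger {y : ℝ}
    (hmin : IsLocalMinOn (kritzinger xs) (Set.Icc 0 1) y) (hy : y ∈ Set.Icc (0 : ℝ) 1) :
    (∀ k, y ≠ xs k) ∧ 2 * (Fintype.card ι + 1) * y = 2 * #{k | xs k ≤ y} + 1 := by
  have hle := kritzinger_right_slope_nonneg_of_isLocalMinOn hmin hy
  have hge := kritzinger_left_slope_nonpos_of_isLocalMinOn hmin hy
  have hsub : ({k | xs k < y} : Finset ι) ⊆ ({k | xs k ≤ y} : Finset ι) :=
    monotone_filter_right _ fun _ _ => le_of_lt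
  have hcard : #{k | xs k ≤ y} ≤ #{k | xs k < y} := by
    have : (#{k | xs k ≤ y} : ℝ) ≤ #{k | xs k < y} := by linarith
    exact_mod_cast this
  have hsame := eq_of_subset_of_card_le hsub hcard
  refine ⟨fun k hk => ?_, by rw [hsame] at hge; linarith⟩
  have : k ∈ ({k | xs k < y} : Finset ι) := hsame ▸ mem_filter.2 ⟨mem_univ k, hk.ge⟩
  exact (mem_filter.1 this).2.ne' hk

theorem stmt_4_general (n : ℕ) (xs : Fin n → ℝ)
    (xstar : ℝ) (hxstar : xstar ∈ Set.Icc (0 : ℝ) 1)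
    (hmin : ∀ x ∈ Set.Icc (0 : ℝ) 1,
      ((n : ℝ) + 1) * xstar ^ 2 - xstar - 2 * ∑ k, max xstar (xs k)
        ≤ ((n : ℝ) + 1) * x ^ 2 - x - 2 * ∑ k, max x (xs k)) :
    (∀ k, xstar ≠ xs k) ∧
      ∃ m : ℕ, xstar = (2 * (m : ℝ) + 1) / (2 * (n : ℝ) + 2) := by
  have hlocal : IsLocalMinOn (kritzinger xs) (Set.Icc 0 1) xstar :=
    IsMinOn.localize <| isMinOn_iff.2 <| by simpa only [kritzinger, Fintype.card_fin] using hmin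
  obtain ⟨hne, hval⟩ := ne_and_two_mul_eq_of_isLocalMinOn_kritzinger hlocal hxstar
  rw [Fintype.card_fin] at hval
  exact ⟨hne, #{k | xs k ≤ xstar}, by rw [eq_div_iff (by positivity)]; linarith⟩

theorem stmt_4 (n : ℕ) (hn : 1 ≤ n) (xs : Fin n → ℝ) (hmono : Monotone xs)
    (hmem : ∀ k, xs k ∈ Set.Icc (0 : ℝ) 1)
    (xstar : ℝ) (hxstar : xstar ∈ Set.Icc (0 : ℝ) 1)
    (hmin : ∀ x ∈ Set.Icc (0 : ℝ) 1,
      ((n : ℝ) + 1) * xstar ^ 2 - xstar - 2 * ∑ k, max xstar (xs k)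
        ≤ ((n : ℝ) + 1) * x ^ 2 - x - 2 * ∑ k, max x (xs k)) :
    (∀ k, xstar ≠ xs k) ∧
      ∃ m : ℕ, xstar = (2 * (m : ℝ) + 1) / (2 * (n : ℝ) + 2) :=
  stmt_4_general n xs xstar hxstar hmin
end

section
/- Let n ≥ 1, let 0 ≤ x_1 ≤ x_2 ≤ … ≤ x_n ≤ 1, let x ∈ [0,1], and let y_1 ≤ y_2 ≤ … ≤ y_{n+1} denote the nondecreasing rearrangement of the multiset {x_1,…,x_n,x}. Then ∑_{k=1}^{n+1} y_k·(2k−1) − ∑_{k=1}^{n} x_k·(2k−1) = x + 2∑_{k=1}^{n} max{x, x_k}. -/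
/-!
For a nondecreasing list `y₀ ≤ … ≤ y_{m-1}`, the entry `y_k` is the larger element of exactly
`2k + 1` ordered pairs `(i, j)` (those with `max i j = k`), so `∑ₖ (2k + 1) yₖ = ∑_{i,j} max yᵢ yⱼ`.
The right-hand side depends only on the multiset of entries, and adding `x` to the multiset adds
the pairs `(x, x)`, `(x, xₖ)` and `(xₖ, x)`, i.e. `x + 2 ∑ₖ max x xₖ`.
-/

/-- `y` is the nondecreasing rearrangement of the multiset `s`. -/
def IsSortedRearrangement {m : ℕ} (y : Fin m → ℝ) (s : Multiset ℝ) : Prop :=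
  Monotone y ∧ (↑(List.ofFn y) : Multiset ℝ) = s

open Finset

section PairwiseMax

variable {α : Type*} [LinearOrder α] [AddCommMonoid α]

noncomputable def pairwiseMaxSum (s : Multiset α) : α :=
  (s.map fun a => (s.map fun b => max a b).sum).sum

theorem pairwiseMaxSum_coe_ofFn {m : ℕ} (f : Fin m → α) :
    pairwiseMaxSum (↑(List.ofFn f)) = ∑ i, ∑ j, max (f i) (f j) := by
  simp only [pairwiseMaxSum, Multiset.map_coe, Multiset.sum_coe, List.map_ofFn, List.sum_ofFn,
    Function.comp_def]

theorem pairwiseMaxSum_cons (a : α) (s : Multiset α) :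
    pairwiseMaxSum (a ::ₘ s) = a + 2 • (s.map (max a)).sum + pairwiseMaxSum s := by
  simp only [pairwiseMaxSum, Multiset.map_cons, Multiset.sum_cons, max_self, Multiset.sum_map_add,
    max_comm _ a, two_nsmul]
  abel

theorem Monotone.sum_sum_max_eq_sum_nsmul :
    ∀ {m : ℕ} {f : Fin m → α}, Monotone f →
      ∑ i, ∑ j, max (f i) (f j) = ∑ k : Fin m, (2 * (k : ℕ) + 1) • f k
  | 0, _, _ => by simp
  | m + 1, f, hf => by
    have hle : ∀ j, f j ≤ f (Fin.last m) := fun j => hf (Fin.le_last j)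
    have ih := (hf.comp Fin.strictMono_castSucc.monotone).sum_sum_max_eq_sum_nsmul
    simp only [Function.comp_apply] at ih
    simp only [Fin.sum_univ_castSucc, max_eq_right (hle _), max_eq_left (hle _), sum_add_distrib,
      ih, sum_const, card_univ, Fintype.card_fin, Fin.val_castSucc, Fin.val_last]
    rw [add_assoc, ← add_nsmul, two_mul, add_assoc]

end PairwiseMax

theorem Monotone.sum_mul_two_mul_add_one_eq_pairwiseMaxSum {m : ℕ} {f : Fin m → ℝ}
    (hf : Monotone f) :
    ∑ k : Fin m, f k * (2 * ((k : ℕ) : ℝ) + 1) = pairwiseMaxSum (↑(List.ofFn f)) := by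
  simp only [pairwiseMaxSum_coe_ofFn, hf.sum_sum_max_eq_sum_nsmul, nsmul_eq_mul, mul_comm (f _)]
  push_cast
  rfl

theorem stmt_6_general (n : ℕ) (xs : Fin n → ℝ) (hmono : Monotone xs)
    (x : ℝ)
    (y : Fin (n + 1) → ℝ)
    (hy : IsSortedRearrangement y (x ::ₘ (↑(List.ofFn xs) : Multiset ℝ))) :
    (∑ k : Fin (n + 1), y k * (2 * ((k : ℕ) : ℝ) + 1))
        - ∑ k : Fin n, xs k * (2 * ((k : ℕ) : ℝ) + 1)
      = x + 2 * ∑ k, max x (xs k) := by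
  rw [hy.1.sum_mul_two_mul_add_one_eq_pairwiseMaxSum,
    hmono.sum_mul_two_mul_add_one_eq_pairwiseMaxSum, hy.2, pairwiseMaxSum_cons,
    Multiset.map_coe, Multiset.sum_coe, List.map_ofFn, List.sum_ofFn, two_nsmul, two_mul]
  simp only [Function.comp_apply, add_sub_cancel_right]

theorem stmt_6 (n : ℕ) (hn : 1 ≤ n) (xs : Fin n → ℝ) (hmono : Monotone xs)
    (hmem : ∀ k, xs k ∈ Set.Icc (0 : ℝ) 1)
    (x : ℝ) (hx : x ∈ Set.Icc (0 : ℝ) 1)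
    (y : Fin (n + 1) → ℝ)
    (hy : IsSortedRearrangement y (x ::ₘ (↑(List.ofFn xs) : Multiset ℝ))) :
    (∑ k : Fin (n + 1), y k * (2 * ((k : ℕ) : ℝ) + 1))
        - ∑ k : Fin n, xs k * (2 * ((k : ℕ) : ℝ) + 1)
      = x + 2 * ∑ k, max x (xs k) :=
  stmt_6_general n xs hmono x y hy
end

section
/- Let n ≥ 1, let x_1,…,x_n ∈ [0,1], write f_n(x) = #{1 ≤ k ≤ n : x_k ≤ x}, and suppose x_{n+1} ∈ [0,1] is chosen as a global minimizer over z ∈ [0,1] of z ↦ ∫₀¹ (f_n(x) + 1_{[z,1]}(x) − (n+1)x)² dx. Writing f_{n+1}(x) = f_n(x) + 1_{[x_{n+1},1]}(x), one has ∫₀¹ (f_{n+1}(x) − (n+1)x)² dx ≤ ∫₀¹ (f_n(x) − nx)² dx + 1/3. -/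
/-- The counting function `f_n(x) = #{1 ≤ k ≤ n : x_k ≤ x}`. -/
noncomputable def countFn (n : ℕ) (xs : Fin n → ℝ) (x : ℝ) : ℕ :=
  (Finset.univ.filter (fun k => xs k ≤ x)).card

/-!
Write `g = f_n - n x` and `h_z = 1_{[z,1]} - x`, so that the integrand at `z` is `(g + h_z)²`
and `∫ (g + h_z)² = ∫ g² + 2 ∫ g h_z + ∫ h_z²`. Since `1_{[z,1]}² = 1_{[z,1]}`, one computes
`∫ h_z² = 1/3 - z(1 - z) ≤ 1/3`. The cross term is `∫_z^1 g - ∫_0^1 x g(x)`, and by Fubini the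
average over `z ∈ [0,1]` of `∫_z^1 g` is exactly `∫_0^1 x g(x)`, so some `z` makes the cross term
nonpositive. The minimizer `x_{n+1}` does at least as well as that `z`.
-/

open MeasureTheory Set
open scoped Interval

theorem integral_integral_upper_eq_integral_sub_mul {g : ℝ → ℝ} {a b : ℝ} (hab : a ≤ b)
    (hg : IntervalIntegrable g volume a b) :
    ∫ z in a..b, ∫ x in z..b, g x = ∫ x in a..b, (x - a) * g x := by
  rw [intervalIntegrable_iff_integrableOn_Ioc_of_le hab] at hg
  set F : ℝ × ℝ → ℝ := {p | p.1 < p.2}.indicator fun p => 1 * g p.2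
  have hF : Integrable F ((volume.restrict (Ioc a b)).prod (volume.restrict (Ioc a b))) :=
    ((integrable_const 1).mul_prod hg).indicator (measurableSet_lt measurable_fst measurable_snd)
  rw [intervalIntegral.integral_of_le hab, intervalIntegral.integral_of_le hab]
  calc ∫ z in Ioc a b, ∫ x in z..b, g x
      = ∫ z in Ioc a b, ∫ x in Ioc a b, F (z, x) := by
        refine setIntegral_congr_fun measurableSet_Ioc fun z hz => ?_
        have hF_eq : ∀ x, F (z, x) = (Ioi z).indicator g x := fun x => by simp [F, indicator]
        have hset : Ioc a b ∩ Ioi z = Ioc z b := by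
          ext x; simp only [mem_inter_iff, mem_Ioc, mem_Ioi]
          constructor
          · exact fun h => ⟨h.2, h.1.2⟩
          · exact fun h => ⟨⟨hz.1.trans h.1, h.2⟩, h.1⟩
        simp_rw [hF_eq]
        rw [setIntegral_indicator measurableSet_Ioi, hset, intervalIntegral.integral_of_le hz.2]
    _ = ∫ x in Ioc a b, ∫ z in Ioc a b, F (z, x) := integral_integral_swap hF
    _ = ∫ x in Ioc a b, (x - a) * g x := by
        refine setIntegral_congr_fun measurableSet_Ioc fun x hx => ?_
        have hF_eq : ∀ z, F (z, x) = (Iio x).indicator (fun _ => g x) z := fun z => by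
          simp [F, indicator]
        have hset : Ioc a b ∩ Iio x = Ioo a x := by
          ext z; simp only [mem_inter_iff, mem_Ioc, mem_Iio, mem_Ioo]
          constructor
          · exact fun h => ⟨h.1.1, h.2⟩
          · exact fun h => ⟨⟨h.1, h.2.le.trans hx.2⟩, h.2⟩
        simp_rw [hF_eq]
        rw [setIntegral_indicator measurableSet_Iio, hset, setIntegral_const,
          Real.volume_real_Ioo_of_le hx.1.le, smul_eq_mul]

theorem IntervalIntegrable.ite_le_mul {φ : ℝ → ℝ} {a b : ℝ} (z : ℝ)
    (hφ : IntervalIntegrable φ volume a b) :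
    IntervalIntegrable (fun x => (if z ≤ x then (1:ℝ) else 0) * φ x) volume a b := by
  rw [intervalIntegrable_iff] at hφ ⊢
  exact hφ.bdd_mul (c := 1)
    (Measurable.ite measurableSet_Ici measurable_const measurable_const).aestronglyMeasurable
    (ae_of_all _ fun x => by split_ifs <;> simp)

theorem integral_ite_le_mul {φ : ℝ → ℝ} {a b z : ℝ} (hz : z ∈ Icc a b)
    (hφ : IntervalIntegrable φ volume a b) :
    ∫ x in a..b, (if z ≤ x then (1:ℝ) else 0) * φ x = ∫ x in z..b, φ x := by
  have hz' : z ∈ uIcc a b := Icc_subset_uIcc hz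
  have hi := hφ.ite_le_mul z
  rw [← intervalIntegral.integral_add_adjacent_intervals
    (hi.mono_set (uIcc_subset_uIcc_left hz')) (hi.mono_set (uIcc_subset_uIcc_right hz'))]
  have h_left : ∫ x in a..z, (if z ≤ x then (1:ℝ) else 0) * φ x = 0 := by
    refine intervalIntegral.integral_zero_ae ?_
    filter_upwards [(countable_singleton z).ae_notMem volume] with x hxz hx
    rw [uIoc_of_le hz.1] at hx
    have : ¬ z ≤ x := fun h => hxz (le_antisymm hx.2 h)
    simp [this]
  rw [h_left, zero_add]
  refine intervalIntegral.integral_congr fun x hx => ?_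
  rw [uIcc_of_le hz.2] at hx
  simp [hx.1]

theorem exists_mul_integral_upper_le {g : ℝ → ℝ} {a b : ℝ} (hab : a < b)
    (hg : IntervalIntegrable g volume a b) :
    ∃ z ∈ Icc a b, (b - a) * ∫ x in z..b, g x ≤ ∫ x in a..b, (x - a) * g x := by
  have hφ : ContinuousOn (fun z => ∫ x in z..b, g x) (Icc a b) := by
    have hg' := (intervalIntegrable_iff_integrableOn_Icc_of_le hab.le).1 hg
    rw [← uIcc_of_le hab.le] at hg' ⊢
    exact intervalIntegral.continuousOn_primitive_interval_left hg'
  obtain ⟨z, hz, hle⟩ := exists_le_setAverage (μ := volume) (s := Ioc a b) (by simp [hab])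
    (by simp) (hφ.integrableOn_Icc.mono_set Ioc_subset_Icc_self)
  refine ⟨z, Ioc_subset_Icc_self hz, ?_⟩
  rwa [setAverage_eq, ← intervalIntegral.integral_of_le hab.le,
    integral_integral_upper_eq_integral_sub_mul hab.le hg, Real.volume_real_Ioc_of_le hab.le,
    smul_eq_mul, le_inv_mul_iff₀ (sub_pos.2 hab)] at hle

theorem ite_le_sub_sq (z x : ℝ) :
    ((if z ≤ x then (1:ℝ) else 0) - x) ^ 2
      = (if z ≤ x then (1:ℝ) else 0) * (1 - 2 * x) + x ^ 2 := by
  split_ifs <;> ring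

theorem intervalIntegrable_ite_le_sub_sq (z a b : ℝ) :
    IntervalIntegrable (fun x => ((if z ≤ x then (1:ℝ) else 0) - x) ^ 2) volume a b := by
  have h_lin : IntervalIntegrable (fun x : ℝ => 1 - 2 * x) volume a b :=
    intervalIntegrable_const.sub (intervalIntegral.intervalIntegrable_id.const_mul 2)
  simp_rw [ite_le_sub_sq]
  exact (h_lin.ite_le_mul z).add (intervalIntegral.intervalIntegrable_pow 2)

theorem integral_ite_le_sub_sq {z : ℝ} (hz : z ∈ Icc (0:ℝ) 1) :
    ∫ x in (0:ℝ)..1, ((if z ≤ x then (1:ℝ) else 0) - x) ^ 2 = 1 / 3 - z * (1 - z) := by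
  have h_lin : IntervalIntegrable (fun x : ℝ => 1 - 2 * x) volume 0 1 :=
    intervalIntegrable_const.sub (intervalIntegral.intervalIntegrable_id.const_mul 2)
  simp_rw [ite_le_sub_sq]
  rw [intervalIntegral.integral_add (h_lin.ite_le_mul z)
      (intervalIntegral.intervalIntegrable_pow 2), integral_ite_le_mul hz h_lin,
    intervalIntegral.integral_sub intervalIntegrable_const
      (intervalIntegral.intervalIntegrable_id.const_mul 2), intervalIntegral.integral_const_mul]
  norm_num [integral_id]
  ring

theorem exists_integral_add_ite_le_sub_sq_le {g : ℝ → ℝ} (hg : IntervalIntegrable g volume 0 1)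
    (hg2 : IntervalIntegrable (fun x => g x ^ 2) volume 0 1) :
    ∃ z ∈ Icc (0:ℝ) 1, ∫ x in (0:ℝ)..1, (g x + (if z ≤ x then (1:ℝ) else 0) - x) ^ 2
      ≤ (∫ x in (0:ℝ)..1, g x ^ 2) + 1 / 3 := by
  obtain ⟨z, hz, hgz⟩ := exists_mul_integral_upper_le zero_lt_one hg
  simp only [sub_zero, one_mul] at hgz
  have hxg : IntervalIntegrable (fun x => x * g x) volume 0 1 :=
    hg.continuousOn_mul continuousOn_id
  have h_expand : ∀ x, (g x + (if z ≤ x then (1:ℝ) else 0) - x) ^ 2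
      = g x ^ 2 + 2 * ((if z ≤ x then (1:ℝ) else 0) * g x - x * g x)
        + ((if z ≤ x then (1:ℝ) else 0) - x) ^ 2 := fun x => by ring
  refine ⟨z, hz, ?_⟩
  simp_rw [h_expand]
  rw [intervalIntegral.integral_add (hg2.add (((hg.ite_le_mul z).sub hxg).const_mul 2))
      (intervalIntegrable_ite_le_sub_sq z 0 1),
    intervalIntegral.integral_add hg2 (((hg.ite_le_mul z).sub hxg).const_mul 2),
    intervalIntegral.integral_const_mul, intervalIntegral.integral_sub (hg.ite_le_mul z) hxg,
    integral_ite_le_mul hz hg, integral_ite_le_sub_sq hz]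
  have hz_mul : 0 ≤ z * (1 - z) := mul_nonneg hz.1 (sub_nonneg.2 hz.2)
  linarith

theorem countFn_mono (n : ℕ) (xs : Fin n → ℝ) : Monotone (countFn n xs) := fun _ _ hxy =>
  Finset.card_le_card fun _ hk => by
    simp only [Finset.mem_filter] at hk ⊢
    exact ⟨hk.1, hk.2.trans hxy⟩

theorem countFn_le (n : ℕ) (xs : Fin n → ℝ) (x : ℝ) : countFn n xs x ≤ n :=
  (Finset.card_filter_le _ _).trans_eq (Finset.card_fin n)

theorem intervalIntegrable_countFn_sub (n : ℕ) (xs : Fin n → ℝ) :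
    IntervalIntegrable (fun x => (countFn n xs x : ℝ) - n * x) volume 0 1 :=
  ((Nat.mono_cast.comp (countFn_mono n xs)).intervalIntegrable).sub
    ((continuous_const.mul continuous_id).intervalIntegrable 0 1)

theorem intervalIntegrable_countFn_sub_sq (n : ℕ) (xs : Fin n → ℝ) :
    IntervalIntegrable (fun x => ((countFn n xs x : ℝ) - n * x) ^ 2) volume 0 1 := by
  have hg := intervalIntegrable_countFn_sub n xs
  have h_bound : ∀ x ∈ Ι (0:ℝ) 1, ‖(countFn n xs x : ℝ) - n * x‖ ≤ n := fun x hx => by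
    rw [uIoc_of_le zero_le_one] at hx
    exact abs_sub_le_of_nonneg_of_le (Nat.cast_nonneg _) (Nat.cast_le.2 (countFn_le n xs x))
      (mul_nonneg (Nat.cast_nonneg n) hx.1.le) (mul_le_of_le_one_right (Nat.cast_nonneg n) hx.2)
  simp_rw [sq]
  rw [intervalIntegrable_iff] at hg ⊢
  exact hg.mul_bdd hg.aestronglyMeasurable (ae_restrict_of_forall_mem measurableSet_uIoc h_bound)

theorem stmt_13_general (n : ℕ) (xs : Fin n → ℝ)
    (xnew : ℝ)
    (hmin : ∀ z ∈ Set.Icc (0 : ℝ) 1,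
      (∫ x in (0:ℝ)..1,
          ((countFn n xs x : ℝ) + (if xnew ≤ x then (1:ℝ) else 0)
            - ((n : ℝ) + 1) * x) ^ 2)
        ≤ ∫ x in (0:ℝ)..1,
            ((countFn n xs x : ℝ) + (if z ≤ x then (1:ℝ) else 0)
              - ((n : ℝ) + 1) * x) ^ 2) :
    (∫ x in (0:ℝ)..1,
        ((countFn n xs x : ℝ) + (if xnew ≤ x then (1:ℝ) else 0)
          - ((n : ℝ) + 1) * x) ^ 2)
      ≤ (∫ x in (0:ℝ)..1, ((countFn n xs x : ℝ) - (n : ℝ) * x) ^ 2) + 1 / 3 := by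
  obtain ⟨z, hz, hle⟩ := exists_integral_add_ite_le_sub_sq_le
    (intervalIntegrable_countFn_sub n xs) (intervalIntegrable_countFn_sub_sq n xs)
  have h_regroup : ∀ x, (countFn n xs x : ℝ) + (if z ≤ x then (1:ℝ) else 0) - ((n : ℝ) + 1) * x
      = ((countFn n xs x : ℝ) - n * x) + (if z ≤ x then (1:ℝ) else 0) - x := fun x => by ring
  calc _ ≤ _ := hmin z hz
    _ = ∫ x in (0:ℝ)..1,
          (((countFn n xs x : ℝ) - n * x) + (if z ≤ x then (1:ℝ) else 0) - x) ^ 2 := by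
        simp_rw [h_regroup]
    _ ≤ _ := hle

theorem stmt_13 (n : ℕ) (hn : 1 ≤ n) (xs : Fin n → ℝ)
    (hmem : ∀ k, xs k ∈ Set.Icc (0 : ℝ) 1)
    (xnew : ℝ) (hxnew : xnew ∈ Set.Icc (0 : ℝ) 1)
    (hmin : ∀ z ∈ Set.Icc (0 : ℝ) 1,
      (∫ x in (0:ℝ)..1,
          ((countFn n xs x : ℝ) + (if xnew ≤ x then (1:ℝ) else 0)
            - ((n : ℝ) + 1) * x) ^ 2)
        ≤ ∫ x in (0:ℝ)..1,
            ((countFn n xs x : ℝ) + (if z ≤ x then (1:ℝ) else 0)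
              - ((n : ℝ) + 1) * x) ^ 2) :
    (∫ x in (0:ℝ)..1,
        ((countFn n xs x : ℝ) + (if xnew ≤ x then (1:ℝ) else 0)
          - ((n : ℝ) + 1) * x) ^ 2)
      ≤ (∫ x in (0:ℝ)..1, ((countFn n xs x : ℝ) - (n : ℝ) * x) ^ 2) + 1 / 3 :=
  stmt_13_general n xs xnew hmin
end

section
/- Let (x_k)_{k=1}^{∞} be a Kritzinger sequence in [0,1] (with arbitrary finite initial segment x_1,…,x_{n₀}, each subsequent point chosen greedily). Then there are infinitely many n ∈ ℕ such that max over x ∈ [0,1] of |∫₀^x (#{1 ≤ k ≤ n : x_k ≤ y} − n·y) dy| ≤ 2·n^{1/3}. -/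
/-!
Write `D_n(y) = #{k ≤ n : x_k ≤ y} - n y`, `G_n(t) = ∫₀ᵗ D_n`, `A_n = ∫₀¹ G_n` and
`E_n = ∫₀¹ D_n²`. Adding a point `z` adds `1_{[z,∞)}(y) - y` to `D_n`; expanding the square and
integrating `∫₀¹ y D_n(y) dy` by parts, the greedy choice of `x_{n+1}` gives
`E_{n+1} ≤ E_n + 2 (A_n - G_n(z)) + 1/3` for every `z ∈ [0,1]`. At a maximum of `G_n` this
shows that `E_n` grows at most like `n / 3`.

Suppose `|G_n(t)| = S > 2 n^{1/3}` and `G_n ≤ A_n + 1/2` on `[0,1]`. Between `0` and `t` there is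
an interval across which `G_n` changes by `S / 2` while staying `S / 2` below the level
`A_n + 1/2` (up to the first passage through `S / 2`, or from the last passage through `-S / 2`).
That level exceeds `G_n` by `1/2` on average, so the interval has length at most `1 / S`, and
Cauchy–Schwarz gives `(S/2)² ≤ E_n / S`, i.e. `E_n ≥ S³ / 4 > 2 n`. If instead some
`G_n(z) > A_n + 1/2`, then `E_{n+1} ≤ E_n - 2/3`. If the bound failed for all large `n`, the first
alternative would contradict the linear growth of `E_n`, and the second would make `E_n`
negative.
-/

/-- The counting function of the first `n` terms (indexed `1,…,n`) of a sequence: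
`#{1 ≤ k ≤ n : x_k ≤ y}`. -/
noncomputable def seqCount (x : ℕ → ℝ) (n : ℕ) (y : ℝ) : ℕ :=
  ((Finset.Icc 1 n).filter (fun k => x k ≤ y)).card

/-- `x` is a Kritzinger sequence with initial segment `x_1,…,x_{n₀}`: all terms lie
in `[0,1]` and, for every `n ≥ n₀`, the point `x_{n+1}` is a global minimizer over
`z ∈ [0,1]` of `z ↦ ∫₀¹ (#{1 ≤ k ≤ n : x_k ≤ y} + 1_{[z,1]}(y) − (n+1)y)² dy`. -/
def IsKritzinger (x : ℕ → ℝ) (n₀ : ℕ) : Prop :=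
  (∀ k, x k ∈ Set.Icc (0 : ℝ) 1) ∧
  ∀ n, n₀ ≤ n → ∀ z ∈ Set.Icc (0 : ℝ) 1,
    (∫ y in (0:ℝ)..1,
        ((seqCount x n y : ℝ) + (if x (n + 1) ≤ y then (1:ℝ) else 0)
          - ((n : ℝ) + 1) * y) ^ 2)
      ≤ ∫ y in (0:ℝ)..1,
          ((seqCount x n y : ℝ) + (if z ≤ y then (1:ℝ) else 0)
            - ((n : ℝ) + 1) * y) ^ 2


open MeasureTheory Set

section HittingTimes

variable {f : ℝ → ℝ} {a b v : ℝ}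

theorem exists_first_hit (hf : Continuous f) (hab : a ≤ b) (ha : f a ≤ v) (hb : v ≤ f b) :
    ∃ τ ∈ Icc a b, f τ = v ∧ ∀ u ∈ Icc a τ, f u ≤ v := by
  set T := Icc a b ∩ {u | v ≤ f u}
  have hbdd : BddBelow T := ⟨a, fun u hu => hu.1.1⟩
  have hτ : sInf T ∈ T :=
    (isClosed_Icc.inter (isClosed_le continuous_const hf)).csInf_mem ⟨b, ⟨hab, le_rfl⟩, hb⟩ hbdd
  have hbelow : ∀ u ∈ Icc a (sInf T), f u ≤ v := by
    rcases hτ.1.1.eq_or_lt with h | h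
    · rintro u ⟨hau, hu⟩
      rwa [le_antisymm (hu.trans h.ge) hau]
    · have hIco : Ico a (sInf T) ⊆ {u | f u ≤ v} := fun u hu =>
        show f u ≤ v from le_of_not_ge fun hvu =>
          hu.2.not_ge (csInf_le hbdd ⟨⟨hu.1, hu.2.le.trans hτ.1.2⟩, hvu⟩)
      rw [← closure_Ico h.ne]
      exact closure_minimal hIco (isClosed_le hf continuous_const)
  exact ⟨sInf T, hτ.1, le_antisymm (hbelow _ ⟨hτ.1.1, le_rfl⟩) hτ.2, hbelow⟩

theorem exists_last_hit (hf : Continuous f) (hab : a ≤ b) (ha : v ≤ f a) (hb : f b ≤ v) :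
    ∃ σ ∈ Icc a b, f σ = v ∧ ∀ u ∈ Icc σ b, f u ≤ v := by
  obtain ⟨τ, hτ, hfτ, hbelow⟩ := exists_first_hit (f := fun u => f (-u))
    (hf.comp continuous_neg) (neg_le_neg hab) (by simpa using hb) (by simpa using ha)
  refine ⟨-τ, ⟨by linarith [hτ.2], by linarith [hτ.1]⟩, hfτ, fun u hu => ?_⟩
  simpa using hbelow (-u) ⟨by linarith [hu.2], by linarith [hu.1]⟩

end HittingTimes

theorem exists_integral_le_mul_apply {g : ℝ → ℝ} (hg : Continuous g) {a b : ℝ} (hab : a ≤ b) :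
    ∃ z ∈ Icc a b, ∫ t in a..b, g t ≤ (b - a) * g z := by
  obtain ⟨z, hz, hmax⟩ := isCompact_Icc.exists_isMaxOn (nonempty_Icc.2 hab) hg.continuousOn
  refine ⟨z, hz, ?_⟩
  calc ∫ t in a..b, g t ≤ ∫ _ in a..b, g z :=
        intervalIntegral.integral_mono_on hab (hg.intervalIntegrable _ _)
          intervalIntegrable_const fun _ ht => hmax ht
    _ = (b - a) * g z := by rw [intervalIntegral.integral_const, smul_eq_mul]

theorem sq_integral_le_mul_integral_sq {f : ℝ → ℝ} {c d : ℝ} (hcd : c ≤ d)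
    (hf : IntervalIntegrable f volume c d)
    (hf2 : IntervalIntegrable (fun y => f y ^ 2) volume c d) :
    (∫ y in c..d, f y) ^ 2 ≤ (d - c) * ∫ y in c..d, f y ^ 2 := by
  set I := ∫ y in c..d, f y
  set J := ∫ y in c..d, f y ^ 2
  have hexpand : ∫ y in c..d, ((d - c) * f y - I) ^ 2 = (d - c) * ((d - c) * J - I ^ 2) := by
    have hpt : (fun y => ((d - c) * f y - I) ^ 2)
        = fun y => ((d - c) ^ 2 * f y ^ 2 - 2 * (d - c) * I * f y) + I ^ 2 := by
      ext y; ring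
    rw [hpt, intervalIntegral.integral_add ((hf2.const_mul _).sub (hf.const_mul _))
        intervalIntegrable_const,
      intervalIntegral.integral_sub (hf2.const_mul _) (hf.const_mul _),
      intervalIntegral.integral_const_mul, intervalIntegral.integral_const_mul,
      intervalIntegral.integral_const, smul_eq_mul]
    ring
  have h0 : 0 ≤ ∫ y in c..d, ((d - c) * f y - I) ^ 2 :=
    intervalIntegral.integral_nonneg hcd fun _ _ => sq_nonneg _
  rcases hcd.eq_or_lt with rfl | hlt
  · simp [I]
  · rw [hexpand, mul_nonneg_iff_of_pos_left (sub_pos.2 hlt)] at h0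
    linarith

theorem intervalIntegral.integral_indicator_Ici {f : ℝ → ℝ} {a b c : ℝ} (hac : a ≤ c)
    (hcb : c ≤ b) :
    ∫ y in a..b, (Ici c).indicator f y = ∫ y in c..b, f y := by
  rw [intervalIntegral.integral_of_le (hac.trans hcb), intervalIntegral.integral_of_le hcb,
    MeasureTheory.integral_indicator measurableSet_Ici,
    Measure.restrict_restrict measurableSet_Ici]
  refine setIntegral_congr_set ?_
  have hIoc : Ioc a b ∩ Ioi c = Ioc c b := by rw [Ioc_inter_Ioi, max_eq_right hac]
  rw [inter_comm, ← hIoc]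
  exact (ae_eq_refl _).inter Ioi_ae_eq_Ici.symm

theorem IntervalIntegrable.indicator {f : ℝ → ℝ} {a b : ℝ} {s : Set ℝ}
    (hf : IntervalIntegrable f volume a b) (hs : MeasurableSet s) :
    IntervalIntegrable (s.indicator f) volume a b :=
  ⟨hf.1.indicator hs, hf.2.indicator hs⟩

noncomputable def pointDiscrepancy (z y : ℝ) : ℝ := (if z ≤ y then 1 else 0) - y

theorem IntervalIntegrable.mul_pointDiscrepancy {f : ℝ → ℝ} {a b : ℝ}
    (hf : IntervalIntegrable f volume a b) (z : ℝ) :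
    IntervalIntegrable (fun y => f y * pointDiscrepancy z y) volume a b := by
  have hpt : (fun y => f y * pointDiscrepancy z y)
      = fun y => (Ici z).indicator f y - y * f y := by
    ext y; simp only [pointDiscrepancy, indicator_apply, mem_Ici]; split_ifs <;> ring
  rw [hpt]
  exact (hf.indicator measurableSet_Ici).sub (hf.continuousOn_mul (continuousOn_id' _))

theorem intervalIntegrable_pointDiscrepancy (z a b : ℝ) :
    IntervalIntegrable (pointDiscrepancy z) volume a b := by
  have hmono : Monotone fun y : ℝ => if z ≤ y then (1 : ℝ) else 0 := by
    intro u v huv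
    dsimp only
    split_ifs with hu hv
    exacts [le_rfl, absurd (hu.trans huv) hv, zero_le_one, le_rfl]
  exact hmono.intervalIntegrable.sub (continuous_id.intervalIntegrable a b)

theorem integral_pointDiscrepancy_sq {z : ℝ} (hz : z ∈ Icc (0 : ℝ) 1) :
    ∫ y in (0 : ℝ)..1, pointDiscrepancy z y ^ 2 = z ^ 2 - z + 1 / 3 := by
  have hpt : (fun y => pointDiscrepancy z y ^ 2)
      = fun y => (Ici z).indicator (fun y => 1 - 2 * y) y + y ^ 2 := by
    ext y; simp only [pointDiscrepancy, indicator_apply, mem_Ici]; split_ifs <;> ring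
  have hlin : IntervalIntegrable (fun y : ℝ => 1 - 2 * y) volume 0 1 :=
    Continuous.intervalIntegrable (by fun_prop) 0 1
  rw [hpt, intervalIntegral.integral_add (hlin.indicator measurableSet_Ici)
      ((continuous_pow 2).intervalIntegrable 0 1),
    intervalIntegral.integral_indicator_Ici hz.1 hz.2,
    intervalIntegral.integral_sub intervalIntegrable_const
      (Continuous.intervalIntegrable (by fun_prop) _ _),
    intervalIntegral.integral_const_mul, integral_id, integral_pow,
    intervalIntegral.integral_const, smul_eq_mul]
  ring

section Primitive

variable {D : ℝ → ℝ}

theorem hasDerivWithinAt_primitive_Ioi (hD : ∀ a b, IntervalIntegrable D volume a b)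
    (hmeas : Measurable D) {y : ℝ} (hy : ContinuousWithinAt D (Ioi y) y) :
    HasDerivWithinAt (fun t => ∫ u in (0 : ℝ)..t, D u) (D y) (Ioi y) y :=
  (intervalIntegral.integral_hasDerivWithinAt_right (s := Ici y) (hD 0 y)
    hmeas.stronglyMeasurable.stronglyMeasurableAtFilter hy).mono Ioi_subset_Ici_self

theorem integral_id_mul_eq (hD : ∀ a b, IntervalIntegrable D volume a b)
    (hmeas : Measurable D) (hright : ∀ y, ContinuousWithinAt D (Ioi y) y) (b : ℝ) :
    ∫ y in (0 : ℝ)..b, y * D y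
      = b * (∫ u in (0 : ℝ)..b, D u) - ∫ t in (0 : ℝ)..b, ∫ u in (0 : ℝ)..t, D u := by
  have := intervalIntegral.integral_mul_deriv_eq_deriv_mul_of_hasDeriv_right (u := id)
    (u' := fun _ => 1) (v' := D) continuousOn_id
    (intervalIntegral.continuous_primitive hD 0).continuousOn
    (fun x _ => (hasDerivAt_id x).hasDerivWithinAt)
    (fun x _ => hasDerivWithinAt_primitive_Ioi hD hmeas (hright x)) intervalIntegrable_const
    (hD 0 b)
  simpa using this

theorem integral_mul_pointDiscrepancy (hD : ∀ a b, IntervalIntegrable D volume a b)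
    (hmeas : Measurable D) (hright : ∀ y, ContinuousWithinAt D (Ioi y) y)
    {z : ℝ} (hz : z ∈ Icc (0 : ℝ) 1) :
    ∫ y in (0 : ℝ)..1, D y * pointDiscrepancy z y
      = (∫ t in (0 : ℝ)..1, ∫ u in (0 : ℝ)..t, D u) - ∫ u in (0 : ℝ)..z, D u := by
  have hpt : (fun y => D y * pointDiscrepancy z y)
      = fun y => (Ici z).indicator D y - y * D y := by
    ext y; simp only [pointDiscrepancy, indicator_apply, mem_Ici]; split_ifs <;> ring
  rw [hpt, intervalIntegral.integral_sub ((hD 0 1).indicator measurableSet_Ici)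
      ((hD 0 1).continuousOn_mul (continuousOn_id' _)),
    intervalIntegral.integral_indicator_Ici hz.1 hz.2, integral_id_mul_eq hD hmeas hright,
    ← intervalIntegral.integral_interval_sub_left (hD 0 1) (hD 0 z)]
  ring

theorem integral_add_pointDiscrepancy_sq (hD : ∀ a b, IntervalIntegrable D volume a b)
    (hD2 : ∀ a b, IntervalIntegrable (fun y => D y ^ 2) volume a b)
    (hmeas : Measurable D) (hright : ∀ y, ContinuousWithinAt D (Ioi y) y)
    {z : ℝ} (hz : z ∈ Icc (0 : ℝ) 1) :
    ∫ y in (0 : ℝ)..1, (D y + pointDiscrepancy z y) ^ 2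
      = (∫ y in (0 : ℝ)..1, D y ^ 2)
        + 2 * ((∫ t in (0 : ℝ)..1, ∫ u in (0 : ℝ)..t, D u) - ∫ u in (0 : ℝ)..z, D u)
        + (z ^ 2 - z + 1 / 3) := by
  have hpt : (fun y => (D y + pointDiscrepancy z y) ^ 2)
      = fun y => (D y ^ 2 + 2 * (D y * pointDiscrepancy z y)) + pointDiscrepancy z y ^ 2 := by
    ext y; ring
  have he := intervalIntegrable_pointDiscrepancy z 0 1
  rw [hpt, intervalIntegral.integral_add
      ((hD2 0 1).add (((hD 0 1).mul_pointDiscrepancy z).const_mul 2))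
      (by simpa only [sq] using he.mul_pointDiscrepancy z),
    intervalIntegral.integral_add (hD2 0 1) (((hD 0 1).mul_pointDiscrepancy z).const_mul 2),
    intervalIntegral.integral_const_mul, integral_mul_pointDiscrepancy hD hmeas hright hz,
    integral_pointDiscrepancy_sq hz]

theorem cube_le_of_gap (hD : ∀ a b, IntervalIntegrable D volume a b)
    (hD2 : ∀ a b, IntervalIntegrable (fun y => D y ^ 2) volume a b) {S c d : ℝ} (hS : 0 < S)
    (hc : 0 ≤ c) (hcd : c ≤ d) (hd : d ≤ 1)
    (hmean : ∀ u ∈ Icc (0 : ℝ) 1,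
      ∫ y in (0 : ℝ)..u, D y ≤ (∫ t in (0 : ℝ)..1, ∫ y in (0 : ℝ)..t, D y) + 1 / 2)
    (hgap : ∀ u ∈ Icc c d,
      ∫ y in (0 : ℝ)..u, D y ≤ (∫ t in (0 : ℝ)..1, ∫ y in (0 : ℝ)..t, D y) + 1 / 2 - S / 2)
    (hjump : S / 2 ≤ |∫ y in c..d, D y|) :
    S ^ 3 ≤ 4 * ∫ y in (0 : ℝ)..1, D y ^ 2 := by
  set A := ∫ t in (0 : ℝ)..1, ∫ y in (0 : ℝ)..t, D y
  have hG := intervalIntegral.continuous_primitive hD 0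
  have hlen : (d - c) * S ≤ 1 := by
    have : (d - c) * (S / 2) ≤ 1 / 2 := calc
      (d - c) * (S / 2) = ∫ _ in c..d, S / 2 := by
        rw [intervalIntegral.integral_const, smul_eq_mul]
      _ ≤ ∫ u in c..d, (A + 1 / 2 - ∫ y in (0 : ℝ)..u, D y) :=
        intervalIntegral.integral_mono_on hcd intervalIntegrable_const
          ((continuous_const.sub hG).intervalIntegrable _ _) fun u hu => by linarith [hgap u hu]
      _ ≤ ∫ u in (0 : ℝ)..1, (A + 1 / 2 - ∫ y in (0 : ℝ)..u, D y) :=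
        intervalIntegral.integral_mono_interval hc hcd hd
          ((ae_restrict_iff' measurableSet_Ioc).2 <| ae_of_all _ fun u hu =>
            sub_nonneg.2 (hmean u (Ioc_subset_Icc_self hu)))
          ((continuous_const.sub hG).intervalIntegrable _ _)
      _ = 1 / 2 := by
        rw [intervalIntegral.integral_sub intervalIntegrable_const (hG.intervalIntegrable _ _),
          intervalIntegral.integral_const, smul_eq_mul]
        ring
    linarith
  have hcs : (S / 2) ^ 2 ≤ (d - c) * ∫ y in (0 : ℝ)..1, D y ^ 2 := calc
    (S / 2) ^ 2 ≤ (∫ y in c..d, D y) ^ 2 := by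
      simpa only [sq_abs] using pow_le_pow_left₀ (by positivity) hjump 2
    _ ≤ (d - c) * ∫ y in c..d, D y ^ 2 := sq_integral_le_mul_integral_sq hcd (hD c d) (hD2 c d)
    _ ≤ (d - c) * ∫ y in (0 : ℝ)..1, D y ^ 2 := by
      refine mul_le_mul_of_nonneg_left ?_ (sub_nonneg.2 hcd)
      exact intervalIntegral.integral_mono_interval hc hcd hd
        (ae_of_all _ fun _ => sq_nonneg _) (hD2 0 1)
  have hE : 0 ≤ ∫ y in (0 : ℝ)..1, D y ^ 2 :=
    intervalIntegral.integral_nonneg zero_le_one fun _ _ => sq_nonneg _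
  nlinarith [mul_le_mul_of_nonneg_right hlen hE, mul_le_mul_of_nonneg_left hcs hS.le]

theorem abs_primitive_cube_le (hD : ∀ a b, IntervalIntegrable D volume a b)
    (hD2 : ∀ a b, IntervalIntegrable (fun y => D y ^ 2) volume a b)
    (hmean : ∀ u ∈ Icc (0 : ℝ) 1,
      ∫ y in (0 : ℝ)..u, D y ≤ (∫ t in (0 : ℝ)..1, ∫ y in (0 : ℝ)..t, D y) + 1 / 2)
    {t : ℝ} (ht : t ∈ Icc (0 : ℝ) 1) (hS : 0 < |∫ y in (0 : ℝ)..t, D y|) :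
    |∫ y in (0 : ℝ)..t, D y| ^ 3 ≤ 4 * ∫ y in (0 : ℝ)..1, D y ^ 2 := by
  set G := fun u => ∫ y in (0 : ℝ)..u, D y
  set S := |G t|
  have hG : Continuous G := intervalIntegral.continuous_primitive hD 0
  have hG0 : G 0 = 0 := intervalIntegral.integral_same
  rcases le_total 0 (G t) with hpos | hneg
  · have hSt : G t = S := (abs_of_nonneg hpos).symm
    obtain ⟨τ, hτ, hGτ, hbelow⟩ :=
      exists_first_hit hG ht.1 (v := S / 2) (by rw [hG0]; positivity) (by linarith)
    refine cube_le_of_gap hD hD2 hS le_rfl hτ.1 (hτ.2.trans ht.2) hmean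
      (fun u hu => by linarith [hbelow u hu, hmean t ht]) ?_
    rw [show (∫ y in (0 : ℝ)..τ, D y) = S / 2 from hGτ, abs_of_pos (by positivity)]
  · have hSt : G t = -S := by simp only [S, abs_of_nonpos hneg, neg_neg]
    obtain ⟨σ, hσ, hGσ, habove⟩ :=
      exists_last_hit hG ht.1 (v := -(S / 2)) (by rw [hG0]; linarith) (by linarith)
    refine cube_le_of_gap hD hD2 hS hσ.1 hσ.2 ht.2 hmean
      (fun u hu => by linarith [habove u hu, hmean 0 ⟨le_rfl, zero_le_one⟩]) ?_
    rw [← intervalIntegral.integral_interval_sub_left (hD 0 t) (hD 0 σ)]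
    change S / 2 ≤ |G t - G σ|
    rw [hSt, hGσ, abs_of_neg (by linarith)]
    linarith

end Primitive

theorem false_of_growth_of_dichotomy {F : ℕ → ℝ} {a b c : ℝ} {n₀ N : ℕ} (hab : a < b)
    (hc : 0 < c) (hF : ∀ n, 0 ≤ F n) (hgrow : ∀ n ≥ n₀, F (n + 1) ≤ F n + a)
    (hdich : ∀ n ≥ N, b * n ≤ F n ∨ F (n + 1) ≤ F n - c) : False := by
  have hlin : ∀ n ≥ n₀, F n ≤ F n₀ + a * (n - n₀) := by
    intro n hn
    induction n, hn using Nat.le_induction with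
    | base => simp
    | succ n hn ih => push_cast; linarith [hgrow n hn]
  obtain ⟨m, hm⟩ := exists_nat_gt ((F n₀ - a * n₀) / (b - a))
  set n₁ := max (max N n₀) m
  have hdrop : ∀ n ≥ n₁, F (n + 1) ≤ F n - c := by
    intro n hn
    refine (hdich n (by omega)).resolve_left fun hbn => ?_
    have hmn : (m : ℝ) ≤ n := by exact_mod_cast (le_max_right _ _).trans hn
    rw [div_lt_iff₀ (sub_pos.2 hab)] at hm
    nlinarith [hlin n (by omega), mul_le_mul_of_nonneg_left hmn (sub_pos.2 hab).le]
  have hdec : ∀ n ≥ n₁, F n ≤ F n₁ - c * (n - n₁) := by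
    intro n hn
    induction n, hn using Nat.le_induction with
    | base => simp
    | succ n hn ih => push_cast; linarith [hdrop n hn]
  obtain ⟨k, hk⟩ := exists_nat_gt (F n₁ / c)
  rw [div_lt_iff₀ hc] at hk
  have := hdec (n₁ + k) (by omega)
  push_cast at this
  linarith [hF (n₁ + k)]

theorem seqCount_eq_sum (x : ℕ → ℝ) (n : ℕ) (y : ℝ) :
    (seqCount x n y : ℝ) = ∑ k ∈ Finset.Icc 1 n, if x k ≤ y then 1 else 0 := by
  rw [seqCount, Finset.card_filter]
  push_cast
  rfl

theorem monotone_seqCount (x : ℕ → ℝ) (n : ℕ) : Monotone fun y => (seqCount x n y : ℝ) :=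
  fun _ _ huv => Nat.cast_le.2 <| Finset.card_le_card <|
    Finset.monotone_filter_right _ fun _ _ hk => hk.trans huv

theorem continuousWithinAt_seqCount_Ioi (x : ℕ → ℝ) (n : ℕ) (y : ℝ) :
    ContinuousWithinAt (fun u => (seqCount x n u : ℝ)) (Ioi y) y := by
  simp only [ContinuousWithinAt, seqCount_eq_sum]
  refine tendsto_finsetSum _ fun k _ => ?_
  by_cases h : x k ≤ y
  · refine tendsto_const_nhds.congr' (eventually_nhdsWithin_of_forall fun u hu => ?_)
    simp [h, h.trans (le_of_lt hu)]
  · refine tendsto_const_nhds.congr' (nhdsWithin_le_nhds ?_)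
    filter_upwards [eventually_lt_nhds (not_le.1 h)] with u hu
    simp [h, not_le.2 hu]

noncomputable def discrepancy (x : ℕ → ℝ) (n : ℕ) (y : ℝ) : ℝ := seqCount x n y - n * y

noncomputable def energy (x : ℕ → ℝ) (n : ℕ) : ℝ := ∫ y in (0 : ℝ)..1, discrepancy x n y ^ 2

section Discrepancy

variable (x : ℕ → ℝ) (n : ℕ)

theorem discrepancy_succ (y : ℝ) :
    discrepancy x (n + 1) y = discrepancy x n y + pointDiscrepancy (x (n + 1)) y := by
  simp only [discrepancy, pointDiscrepancy, seqCount_eq_sum,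
    Finset.sum_Icc_succ_top (Nat.le_add_left 1 n)]
  push_cast
  ring

theorem intervalIntegrable_discrepancy (a b : ℝ) :
    IntervalIntegrable (discrepancy x n) volume a b :=
  (monotone_seqCount x n).intervalIntegrable.sub
    (Continuous.intervalIntegrable (by fun_prop) a b)

theorem intervalIntegrable_discrepancy_sq (a b : ℝ) :
    IntervalIntegrable (fun y => discrepancy x n y ^ 2) volume a b := by
  have hsq : Monotone fun y => (seqCount x n y : ℝ) ^ 2 := fun _ _ h =>
    pow_le_pow_left₀ (Nat.cast_nonneg _) (monotone_seqCount x n h) 2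
  have hpt : (fun y => discrepancy x n y ^ 2) = fun y =>
      (seqCount x n y : ℝ) ^ 2 - 2 * n * (y * seqCount x n y) + (n : ℝ) ^ 2 * y ^ 2 := by
    ext y; simp only [discrepancy]; ring
  rw [hpt]
  exact (hsq.intervalIntegrable.sub
    (((monotone_seqCount x n).intervalIntegrable.continuousOn_mul (continuousOn_id' _)).const_mul
      _)).add (Continuous.intervalIntegrable (by fun_prop) a b)

theorem measurable_discrepancy : Measurable (discrepancy x n) :=
  (monotone_seqCount x n).measurable.sub (by fun_prop)

theorem continuousWithinAt_discrepancy_Ioi (y : ℝ) :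
    ContinuousWithinAt (discrepancy x n) (Ioi y) y :=
  (continuousWithinAt_seqCount_Ioi x n y).sub (Continuous.continuousWithinAt (by fun_prop))

theorem energy_nonneg : 0 ≤ energy x n :=
  intervalIntegral.integral_nonneg zero_le_one fun _ _ => sq_nonneg _

end Discrepancy

namespace IsKritzinger

variable {x : ℕ → ℝ} {n₀ n : ℕ}

theorem energy_succ_le (hK : IsKritzinger x n₀) (hn : n₀ ≤ n) {z : ℝ}
    (hz : z ∈ Icc (0 : ℝ) 1) :
    energy x (n + 1) ≤ energy x n
      + 2 * ((∫ t in (0 : ℝ)..1, ∫ y in (0 : ℝ)..t, discrepancy x n y)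
        - ∫ y in (0 : ℝ)..z, discrepancy x n y) + 1 / 3 := by
  have h := hK.2 n hn z hz
  have hL : (∫ y in (0 : ℝ)..1,
      ((seqCount x n y : ℝ) + (if x (n + 1) ≤ y then (1 : ℝ) else 0) - ((n : ℝ) + 1) * y) ^ 2)
      = energy x (n + 1) :=
    intervalIntegral.integral_congr fun y _ => by
      rw [discrepancy_succ]; simp only [discrepancy, pointDiscrepancy]; ring
  have hR : (∫ y in (0 : ℝ)..1,
      ((seqCount x n y : ℝ) + (if z ≤ y then (1 : ℝ) else 0) - ((n : ℝ) + 1) * y) ^ 2)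
      = ∫ y in (0 : ℝ)..1, (discrepancy x n y + pointDiscrepancy z y) ^ 2 :=
    intervalIntegral.integral_congr fun y _ => by
      simp only [discrepancy, pointDiscrepancy]; ring
  rw [hL, hR, integral_add_pointDiscrepancy_sq (intervalIntegrable_discrepancy x n)
    (intervalIntegrable_discrepancy_sq x n) (measurable_discrepancy x n)
    (continuousWithinAt_discrepancy_Ioi x n) hz] at h
  have hz2 : z ^ 2 - z ≤ 0 := by nlinarith [mul_nonneg hz.1 (sub_nonneg.2 hz.2)]
  have hE : energy x n = ∫ y in (0 : ℝ)..1, discrepancy x n y ^ 2 := rfl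
  linarith

theorem energy_succ_le_add (hK : IsKritzinger x n₀) (hn : n₀ ≤ n) :
    energy x (n + 1) ≤ energy x n + 1 / 3 := by
  obtain ⟨z, hz, hmax⟩ := exists_integral_le_mul_apply
    (intervalIntegral.continuous_primitive (intervalIntegrable_discrepancy x n) 0) zero_le_one
  rw [sub_zero, one_mul] at hmax
  linarith [hK.energy_succ_le hn hz]

theorem energy_large_or_drop (hK : IsKritzinger x n₀) (hn : n₀ ≤ n)
    (hbad : ∃ t ∈ Icc (0 : ℝ) 1,
      2 * (n : ℝ) ^ ((1 : ℝ) / 3) < |∫ y in (0 : ℝ)..t, discrepancy x n y|) :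
    2 * n ≤ energy x n ∨ energy x (n + 1) ≤ energy x n - 2 / 3 := by
  obtain ⟨t, ht, hlarge⟩ := hbad
  by_cases hmean : ∀ u ∈ Icc (0 : ℝ) 1, ∫ y in (0 : ℝ)..u, discrepancy x n y
      ≤ (∫ t in (0 : ℝ)..1, ∫ y in (0 : ℝ)..t, discrepancy x n y) + 1 / 2
  · left
    have h8n : 8 * (n : ℝ) = (2 * (n : ℝ) ^ ((1 : ℝ) / 3)) ^ 3 := by
      rw [mul_pow, ← Real.rpow_natCast ((n : ℝ) ^ _), ← Real.rpow_mul (Nat.cast_nonneg n)]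
      norm_num
    have hpos : 0 < |∫ y in (0 : ℝ)..t, discrepancy x n y| :=
      (by positivity : (0 : ℝ) ≤ 2 * (n : ℝ) ^ ((1 : ℝ) / 3)).trans_lt hlarge
    have hcube_le := abs_primitive_cube_le (intervalIntegrable_discrepancy x n)
      (intervalIntegrable_discrepancy_sq x n) hmean ht hpos
    have hcube_lt := pow_lt_pow_left₀ hlarge (by positivity) (by norm_num : (3 : ℕ) ≠ 0)
    unfold energy
    linarith
  · right
    push Not at hmean
    obtain ⟨z, hz, hzlarge⟩ := hmean
    linarith [hK.energy_succ_le hn hz]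

end IsKritzinger

theorem stmt_15_general (x : ℕ → ℝ) (n₀ : ℕ)
    (hK : IsKritzinger x n₀) :
    ∀ N : ℕ, ∃ n : ℕ, N ≤ n ∧
      ∀ t ∈ Set.Icc (0 : ℝ) 1,
        |∫ y in (0:ℝ)..t, ((seqCount x n y : ℝ) - (n : ℝ) * y)|
          ≤ 2 * (n : ℝ) ^ ((1 : ℝ) / 3) := by
  intro N
  by_contra! hbad
  exact false_of_growth_of_dichotomy (F := energy x) (N := max N n₀)
    (by norm_num : (1 : ℝ) / 3 < 2) (by norm_num : (0 : ℝ) < 2 / 3) (energy_nonneg x)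
    (fun n hn => hK.energy_succ_le_add hn)
    fun n hn => hK.energy_large_or_drop (le_of_max_le_right hn) (hbad n (le_of_max_le_left hn))

theorem stmt_15 (x : ℕ → ℝ) (n₀ : ℕ) (hn₀ : 1 ≤ n₀)
    (hK : IsKritzinger x n₀) :
    ∀ N : ℕ, ∃ n : ℕ, N ≤ n ∧
      ∀ t ∈ Set.Icc (0 : ℝ) 1,
        |∫ y in (0:ℝ)..t, ((seqCount x n y : ℝ) - (n : ℝ) * y)|
          ≤ 2 * (n : ℝ) ^ ((1 : ℝ) / 3) :=
  stmt_15_general x n₀ hK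
end
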